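/- arXiv:2102.13612 — 2 statements merged into one kernel-verified Lean document; each statement's English description precedes it below -/
import Mathlib

section
/- Every nonzero element of the inverse hull H(S_T) can be written in the form θ_s ∘ θ_{x_1}^{-1}θ_{x_1} ∘ ⋯ ∘ θ_{x_n}^{-1}θ_{x_n} ∘ θ_w^{-1} for some n ≥ 1, letters x_i ∈ A, and s, w ∈ L_T ∪ {1} (where θ_1 denotes the identity map on L_T). -/
def IsWord {A : Type} (T : A → A → Prop) (w : List A) : Prop := w ≠ [] ∧ w.Chain' T

def PMap (A : Type) := List A → Option (List A)

def pzero {A : Type} : PMap A := fun _ => none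

def pcomp {A : Type} (f g : PMap A) : PMap A := fun x => (g x).bind f

open Classical in
noncomputable def pinv {A : Type} (f : PMap A) : PMap A := fun y =>
  if h : ∃ x, f x = some y then some h.choose else none

open Classical in
noncomputable def theta {A : Type} (T : A → A → Prop) (w : List A) : PMap A := fun x =>
  if IsWord T x ∧ IsWord T (w ++ x) then some (w ++ x) else none

open Classical in
noncomputable def pid {A : Type} (T : A → A → Prop) : PMap A := fun x =>
  if IsWord T x then some x else none

noncomputable def idemL {A : Type} (T : A → A → Prop) (a : A) : PMap A :=
  pcomp (pinv (theta T [a])) (theta T [a])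

noncomputable def rgIdem {A : Type} (T : A → A → Prop) (a : A) : PMap A :=
  pcomp (theta T [a]) (pinv (theta T [a]))

noncomputable def prodIdems {A : Type} (T : A → A → Prop) (xs : List A) : PMap A :=
  (xs.map (idemL T)).foldr pcomp (pid T)

def pdom {A : Type} (f : PMap A) : Set (List A) := {x | f x ≠ none}

inductive Hull {A : Type} (T : A → A → Prop) : PMap A → Prop
  | gen {w : List A} : IsWord T w → Hull T (theta T w)
  | zero : Hull T pzero
  | comp {f g : PMap A} : Hull T f → Hull T g → Hull T (pcomp f g)
  | inv {f : PMap A} : Hull T f → Hull T (pinv f)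

open Classical in
noncomputable def smul {A : Type} (T : A → A → Prop) :
    Option (List A) → Option (List A) → Option (List A)
  | some u, some v => if IsWord T (u ++ v) then some (u ++ v) else none
  | _, _ => none

/-!
A nonzero element of the hull acts as `w z ↦ s z` on those `z ∈ L_T` with `w z, s z ∈ L_T`
whose first letter may follow each of `x₁, …, xₙ`; this map is exactly
`θ_s θ_{x₁}⁻¹θ_{x₁} ⋯ θ_{xₙ}⁻¹θ_{xₙ} θ_w⁻¹`. Such maps, together with `0`, contain every
`θ_v` (take `x₁` the last letter of `v` and `w = 1`) and are closed under inversion (swap `s`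
and `w`). For the composite of `w z ↦ s z` after `w' z' ↦ s' z'` with `|w| ≤ |s'|`, the
middle words must match, `s' = w t`, and the composite is `w' z' ↦ s t z'`: the constraint
`s' z' ∈ L_T` becomes "`z'` may follow the last letter of `s'`", and when `t = 1` the letters
of both maps are merged. The case `|w| > |s'|` follows by inverting.
-/

section PartialMaps

variable {A : Type}

def PInjective (f : PMap A) : Prop :=
  ∀ ⦃x₁ x₂ u : List A⦄, f x₁ = some u → f x₂ = some u → x₁ = x₂

theorem PMap.ext_some {f g : PMap A} (h : ∀ y u, f y = some u ↔ g y = some u) : f = g :=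
  funext fun y => Option.ext (h y)

theorem eq_pzero_or_exists_eq_some (f : PMap A) : f = pzero ∨ ∃ y u, f y = some u := by
  by_cases h : ∃ y u, f y = some u
  · exact .inr h
  · simp only [not_exists] at h
    exact .inl (funext fun y => Option.eq_none_iff_forall_ne_some.mpr (h y))

theorem pcomp_eq_some {f g : PMap A} {y u : List A} :
    pcomp f g y = some u ↔ ∃ m, g y = some m ∧ f m = some u :=
  Option.bind_eq_some_iff

theorem pinv_eq_some {f : PMap A} (hf : PInjective f) {u x : List A} :
    pinv f u = some x ↔ f x = some u := by
  unfold pinv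
  split_ifs with h
  · exact ⟨fun hx => Option.some_inj.mp hx ▸ h.choose_spec,
      fun hx => congrArg some (hf h.choose_spec hx)⟩
  · exact ⟨nofun, fun hx => absurd ⟨x, hx⟩ h⟩

theorem PInjective.pcomp {f g : PMap A} (hf : PInjective f) (hg : PInjective g) :
    PInjective (pcomp f g) := by
  intro x₁ x₂ u h₁ h₂
  obtain ⟨m₁, hg₁, hf₁⟩ := pcomp_eq_some.mp h₁
  obtain ⟨m₂, hg₂, hf₂⟩ := pcomp_eq_some.mp h₂
  obtain rfl := hf hf₁ hf₂
  exact hg hg₁ hg₂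

theorem pinv_pcomp {f g : PMap A} (hf : PInjective f) (hg : PInjective g) :
    pinv (pcomp f g) = pcomp (pinv g) (pinv f) := by
  refine PMap.ext_some fun y u => ?_
  simp only [pinv_eq_some (hf.pcomp hg), pcomp_eq_some, pinv_eq_some hf, pinv_eq_some hg]
  exact ⟨fun ⟨m, hgm, hfm⟩ => ⟨m, hfm, hgm⟩, fun ⟨m, hfm, hgm⟩ => ⟨m, hgm, hfm⟩⟩

theorem pinv_pzero : pinv (pzero : PMap A) = pzero := by
  funext y
  simp [pinv, pzero]

theorem pcomp_pzero_left (g : PMap A) : pcomp pzero g = pzero := by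
  funext y
  exact Option.bind_eq_none_iff.mpr fun _ _ => rfl

end PartialMaps

section Words

variable {A : Type} {T : A → A → Prop}

variable (T) in
def CanFollow (xs z : List A) : Prop := ∀ a ∈ xs, ∀ b ∈ z.head?, T a b

theorem canFollow_append_left {xs xs' z : List A} :
    CanFollow T (xs ++ xs') z ↔ CanFollow T xs z ∧ CanFollow T xs' z := by
  simp only [CanFollow, List.mem_append, or_imp, forall_and]

theorem canFollow_append_right {xs t z : List A} (ht : t ≠ []) :
    CanFollow T xs (t ++ z) ↔ CanFollow T xs t := by
  rw [CanFollow, CanFollow, List.head?_append_of_ne_nil _ ht]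

theorem isWord_iff {s : List A} : IsWord T s ↔ s ≠ [] ∧ s.IsChain T := Iff.rfl

theorem IsWord.isChain {s : List A} (hs : IsWord T s) : s.IsChain T := hs.2

theorem isChain_iff_eq_nil_or_isWord {s : List A} : s.IsChain T ↔ s = [] ∨ IsWord T s := by
  rcases eq_or_ne s [] with rfl | hs
  · simp
  · simp [isWord_iff, hs]

theorem IsWord.of_append_left {u z : List A} (h : IsWord T (u ++ z)) (hu : u ≠ []) :
    IsWord T u :=
  ⟨hu, h.isChain.left_of_append⟩

theorem IsWord.of_append_right {u z : List A} (h : IsWord T (u ++ z)) (hz : z ≠ []) :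
    IsWord T z :=
  ⟨hz, h.isChain.right_of_append⟩

theorem isWord_append_iff {u z : List A} (hu : u.IsChain T) (hz : IsWord T z) :
    IsWord T (u ++ z) ↔ CanFollow T u.getLast?.toList z := by
  simp [isWord_iff, hz.1, List.isChain_append, hu, hz.isChain, CanFollow]

end Words

section NormalForm

variable {A : Type} {T : A → A → Prop}

theorem theta_eq_some {v x u : List A} :
    theta T v x = some u ↔ IsWord T x ∧ IsWord T (v ++ x) ∧ u = v ++ x := by
  unfold theta
  split_ifs with h <;> simp_all [eq_comm]

theorem pInjective_theta (v : List A) : PInjective (theta T v) := by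
  intro x₁ x₂ u h₁ h₂
  obtain ⟨-, -, rfl⟩ := theta_eq_some.mp h₁
  exact List.append_cancel_left (theta_eq_some.mp h₂).2.2

theorem idemL_eq_some {a : A} {x u : List A} :
    idemL T a x = some u ↔ IsWord T x ∧ CanFollow T [a] x ∧ u = x := by
  simp only [idemL, pcomp_eq_some, pinv_eq_some (pInjective_theta _), theta_eq_some]
  constructor
  · rintro ⟨_, ⟨hx, hax, rfl⟩, -, -, h⟩
    exact ⟨hx, (isWord_append_iff (List.isChain_singleton a) hx).mp hax,
      List.append_cancel_left h.symm⟩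
  · rintro ⟨hx, hax, rfl⟩
    have hax' := (isWord_append_iff (List.isChain_singleton a) hx).mpr hax
    exact ⟨_, ⟨hx, hax', rfl⟩, hx, hax', rfl⟩

theorem prodIdems_eq_some {xs x u : List A} :
    prodIdems T xs x = some u ↔ IsWord T x ∧ CanFollow T xs x ∧ u = x := by
  induction xs generalizing u with
  | nil =>
    change pid T x = some u ↔ _
    unfold pid
    split_ifs with h <;> simp_all [CanFollow, eq_comm]
  | cons a xs ih =>
    change pcomp (idemL T a) (prodIdems T xs) x = some u ↔ _
    rw [pcomp_eq_some, ← List.singleton_append, canFollow_append_left]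
    simp only [ih, idemL_eq_some]
    constructor
    · rintro ⟨_, ⟨hx, hxs, rfl⟩, -, ha, rfl⟩
      exact ⟨hx, ⟨ha, hxs⟩, rfl⟩
    · rintro ⟨hx, ⟨ha, hxs⟩, rfl⟩
      exact ⟨_, ⟨hx, hxs, rfl⟩, hx, ha, rfl⟩

variable (T) in
noncomputable def normalForm (s xs w : List A) : PMap A :=
  pcomp (theta T s) (pcomp (prodIdems T xs) (pinv (theta T w)))

theorem normalForm_eq_some {s xs w y u : List A} :
    normalForm T s xs w y = some u ↔ ∃ z, y = w ++ z ∧ u = s ++ z ∧ IsWord T (w ++ z) ∧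
      IsWord T z ∧ CanFollow T xs z ∧ IsWord T (s ++ z) := by
  simp only [normalForm, pcomp_eq_some, pinv_eq_some (pInjective_theta _), theta_eq_some,
    prodIdems_eq_some]
  constructor
  · rintro ⟨z, ⟨_, ⟨hz, hwz, rfl⟩, -, hxs, rfl⟩, -, hsz, rfl⟩
    exact ⟨z, rfl, rfl, hwz, hz, hxs, hsz⟩
  · rintro ⟨z, rfl, rfl, hwz, hz, hxs, hsz⟩
    exact ⟨_, ⟨_, ⟨hz, hwz, rfl⟩, hz, hxs, rfl⟩, hz, hsz, rfl⟩

theorem pInjective_normalForm {s xs w : List A} : PInjective (normalForm T s xs w) := by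
  intro x₁ x₂ u h₁ h₂
  obtain ⟨z₁, rfl, rfl, -⟩ := normalForm_eq_some.mp h₁
  obtain ⟨z₂, rfl, h, -⟩ := normalForm_eq_some.mp h₂
  rw [List.append_cancel_left h]

theorem pinv_normalForm {s xs w : List A} : pinv (normalForm T s xs w) = normalForm T w xs s :=
  PMap.ext_some fun y u => by
    rw [pinv_eq_some pInjective_normalForm, normalForm_eq_some, normalForm_eq_some]
    exact ⟨fun ⟨z, h₁, h₂, h₃, h₄, h₅, h₆⟩ => ⟨z, h₂, h₁, h₆, h₄, h₅, h₃⟩,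
      fun ⟨z, h₁, h₂, h₃, h₄, h₅, h₆⟩ => ⟨z, h₂, h₁, h₆, h₄, h₅, h₃⟩⟩

theorem theta_eq_normalForm {v : List A} (hv : IsWord T v) :
    theta T v = normalForm T v v.getLast?.toList [] :=
  PMap.ext_some fun y u => by
    simp only [theta_eq_some, normalForm_eq_some, List.nil_append, exists_eq_left']
    constructor
    · rintro ⟨hy, hvy, rfl⟩
      exact ⟨rfl, hy, hy, (isWord_append_iff hv.isChain hy).mp hvy, hvy⟩
    · rintro ⟨rfl, hy, -, -, hvy⟩
      exact ⟨hy, hvy, rfl⟩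

end NormalForm

section HasNormalForm

variable {A : Type} {T : A → A → Prop}

variable (T) in
def HasNormalForm (γ : PMap A) : Prop :=
  γ = pzero ∨ ∃ s w xs : List A, s.IsChain T ∧ w.IsChain T ∧ xs ≠ [] ∧ γ = normalForm T s xs w

theorem HasNormalForm.pinv {γ : PMap A} (h : HasNormalForm T γ) :
    HasNormalForm T (_root_.pinv γ) := by
  rcases h with rfl | ⟨s, w, xs, hs, hw, hxs, rfl⟩
  · exact .inl pinv_pzero
  · exact .inr ⟨w, s, xs, hw, hs, hxs, pinv_normalForm⟩

theorem HasNormalForm.pcomp_of_length_lt {s xs w s' xs' w' : List A}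
    (hs' : s'.IsChain T) (hw' : w'.IsChain T) (hxs' : xs' ≠ []) (hlen : w.length < s'.length) :
    HasNormalForm T (pcomp (normalForm T s xs w) (normalForm T s' xs' w')) := by
  rcases eq_pzero_or_exists_eq_some (pcomp (normalForm T s xs w) (normalForm T s' xs' w'))
    with h | ⟨y, u, h⟩
  · exact .inl h
  obtain ⟨t, rfl, ht, hst, hxst⟩ :
      ∃ t, s' = w ++ t ∧ t ≠ [] ∧ IsWord T (s ++ t) ∧ CanFollow T xs t := by
    obtain ⟨_, hg, hf⟩ := pcomp_eq_some.mp h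
    obtain ⟨z', -, rfl, -⟩ := normalForm_eq_some.mp hg
    obtain ⟨z, hm, -, -, -, hxsz, hsz⟩ := normalForm_eq_some.mp hf
    obtain ⟨t, rfl, rfl⟩ : ∃ t, s' = w ++ t ∧ z = t ++ z' := by
      rcases List.append_eq_append_iff.mp hm with ⟨t, rfl, -⟩ | h
      · simp at hlen
      · exact h
    have ht : t ≠ [] := by
      rintro rfl
      simp at hlen
    rw [← List.append_assoc] at hsz
    exact ⟨t, rfl, ht, hsz.of_append_left (by simp [ht]), (canFollow_append_right ht).mp hxsz⟩
  refine .inr ⟨s ++ t, w', (w ++ t).getLast?.toList ++ xs', hst.isChain, hw', by simp [hxs'],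
    PMap.ext_some fun y u => ?_⟩
  simp only [pcomp_eq_some, normalForm_eq_some, canFollow_append_left]
  constructor
  · rintro ⟨_, ⟨z', rfl, rfl, hwz', hz', hxsz', hs'z'⟩, z, hm, rfl, -, -, -, hsz⟩
    obtain rfl : z = t ++ z' := (List.append_cancel_left ((List.append_assoc ..).symm.trans hm)).symm
    exact ⟨z', rfl, by simp, hwz', hz', ⟨(isWord_append_iff hs' hz').mp hs'z', hxsz'⟩,
      by simpa using hsz⟩
  · rintro ⟨z', rfl, rfl, hwz', hz', ⟨hlast, hxsz'⟩, hsz'⟩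
    have hs'z' := (isWord_append_iff hs' hz').mpr hlast
    rw [List.append_assoc] at hs'z' hsz'
    exact ⟨_, ⟨z', rfl, by simp, hwz', hz', hxsz', by simpa using hs'z'⟩, t ++ z', rfl, by simp,
      hs'z', hs'z'.of_append_right (by simp [ht]), (canFollow_append_right ht).mpr hxst, hsz'⟩

theorem HasNormalForm.pcomp_of_length_eq {s xs w s' xs' w' : List A}
    (hs : s.IsChain T) (hs' : s'.IsChain T) (hw' : w'.IsChain T) (hxs : xs ≠ [])
    (hlen : w.length = s'.length) :
    HasNormalForm T (pcomp (normalForm T s xs w) (normalForm T s' xs' w')) := by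
  rcases eq_pzero_or_exists_eq_some (pcomp (normalForm T s xs w) (normalForm T s' xs' w'))
    with h | ⟨y, u, h⟩
  · exact .inl h
  obtain rfl : w = s' := by
    obtain ⟨_, hg, hf⟩ := pcomp_eq_some.mp h
    obtain ⟨z', -, rfl, -⟩ := normalForm_eq_some.mp hg
    obtain ⟨z, hm, -⟩ := normalForm_eq_some.mp hf
    exact (List.append_inj hm hlen.symm).1.symm
  refine .inr ⟨s, w', w.getLast?.toList ++ (xs ++ xs'), hs, hw', by simp [hxs],
    PMap.ext_some fun y u => ?_⟩
  simp only [pcomp_eq_some, normalForm_eq_some, canFollow_append_left]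
  constructor
  · rintro ⟨_, ⟨z', rfl, rfl, hwz', hz', hxsz', hwz⟩, z, hm, rfl, -, -, hxsz, hsz⟩
    obtain rfl := List.append_cancel_left hm
    exact ⟨z', rfl, rfl, hwz', hz', ⟨(isWord_append_iff hs' hz').mp hwz, hxsz, hxsz'⟩, hsz⟩
  · rintro ⟨z, rfl, rfl, hwz', hz, ⟨hlast, hxsz, hxsz'⟩, hsz⟩
    have hwz := (isWord_append_iff hs' hz).mpr hlast
    exact ⟨_, ⟨z, rfl, rfl, hwz', hz, hxsz', hwz⟩, z, rfl, rfl, hwz, hz, hxsz, hsz⟩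

theorem HasNormalForm.pcomp {f g : PMap A} (hf : HasNormalForm T f) (hg : HasNormalForm T g) :
    HasNormalForm T (_root_.pcomp f g) := by
  rcases hf with rfl | ⟨s, w, xs, hs, hw, hxs, rfl⟩
  · exact .inl (pcomp_pzero_left g)
  rcases hg with rfl | ⟨s', w', xs', hs', hw', hxs', rfl⟩
  · exact .inl rfl
  rcases lt_trichotomy w.length s'.length with hlt | heq | hgt
  · exact pcomp_of_length_lt hs' hw' hxs' hlt
  · exact pcomp_of_length_eq hs hs' hw' hxs heq
  · have hinv : _root_.pcomp (normalForm T s xs w) (normalForm T s' xs' w') =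
        _root_.pinv (_root_.pcomp (normalForm T w' xs' s') (normalForm T w xs s)) := by
      rw [pinv_pcomp pInjective_normalForm pInjective_normalForm, pinv_normalForm,
        pinv_normalForm]
    rw [hinv]
    exact (pcomp_of_length_lt hw hs hxs hgt).pinv

theorem Hull.hasNormalForm {γ : PMap A} (hγ : Hull T γ) : HasNormalForm T γ := by
  induction hγ with
  | @gen v hv =>
    exact .inr ⟨v, [], v.getLast?.toList, hv.isChain, .nil, by simp [hv.1],
      theta_eq_normalForm hv⟩
  | zero => exact .inl rfl
  | comp _ _ hf hg => exact hf.pcomp hg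
  | inv _ hf => exact hf.pinv

end HasNormalForm

theorem stmt6_general {A : Type} (T : A → A → Prop)
    (γ : PMap A) (hγ : Hull T γ) (hnz : γ ≠ pzero) :
    ∃ (s w xs : List A),
      (s = [] ∨ IsWord T s) ∧ (w = [] ∨ IsWord T w) ∧ xs ≠ [] ∧
      γ = pcomp (theta T s) (pcomp (prodIdems T xs) (pinv (theta T w))) := by
  obtain ⟨s, w, xs, hs, hw, hxs, rfl⟩ := hγ.hasNormalForm.resolve_left hnz
  exact ⟨s, w, xs, isChain_iff_eq_nil_or_isWord.mp hs, isChain_iff_eq_nil_or_isWord.mp hw, hxs,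
    rfl⟩

/-- Every nonzero element of the inverse hull is of the form
`θ_s θ_{x₁}⁻¹θ_{x₁} ⋯ θ_{xₙ}⁻¹θ_{xₙ} θ_w⁻¹` with `n ≥ 1`, `xᵢ ∈ A`, and
`s, w ∈ L_T ∪ {1}` (note `theta T [] ` is the identity on `L_T`). -/
theorem stmt6 {A : Type} [Fintype A] (T : A → A → Prop) (hT : ∀ a : A, ∃ b : A, T a b)
    (γ : PMap A) (hγ : Hull T γ) (hnz : γ ≠ pzero) :
    ∃ (s w xs : List A),
      (s = [] ∨ IsWord T s) ∧ (w = [] ∨ IsWord T w) ∧ xs ≠ [] ∧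
      γ = pcomp (theta T s) (pcomp (prodIdems T xs) (pinv (theta T w))) :=
  stmt6_general T γ hγ hnz
end

section
/- Let n ≥ 1 and x_1,…,x_n ∈ A with τ = θ_{x_1}^{-1}θ_{x_1} ⋯ θ_{x_n}^{-1}θ_{x_n} nonzero. Then there exists a ∈ A with τ > θ_a θ_a^{-1} in the natural partial order on idempotent partial bijections (i.e., the domain of θ_a θ_a^{-1} is a proper subset of the domain of τ). -/
/-!
The domain of `τ` consists of the words `w` such that every `xᵢ w` is a word. If `τ ≠ 0`, pick
such a `w` and let `a` be its first letter; then every `xᵢ a` is allowed, so every word `a x` lies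
in `dom τ`, that is, `dom (θ_a θ_a⁻¹) ⊆ dom τ`. The one-letter word `a` lies in `dom τ` but not in
`dom (θ_a θ_a⁻¹)`, whose elements `a x` have `x` nonempty.
-/

section PartialMaps

variable {A : Type} {f g : PMap A} {x y : List A}

theorem pcomp_apply_of_eq_none (h : f x = none) : pcomp g f x = none := by
  rw [pcomp, h]
  rfl

theorem pcomp_apply_of_eq_some (h : f x = some y) : pcomp g f x = g y := by
  rw [pcomp, h]
  rfl

theorem pinv_apply_of_exists (h : ∃ x, f x = some y) : pinv f y = some h.choose := by
  rw [pinv, dif_pos h]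

theorem pinv_apply_of_not_exists (h : ¬∃ x, f x = some y) : pinv f y = none := by
  rw [pinv, dif_neg h]

theorem mem_pdom_pcomp_self_pinv_iff : y ∈ pdom (pcomp f (pinv f)) ↔ ∃ x, f x = some y := by
  by_cases h : ∃ x, f x = some y
  · simp [pdom, pcomp_apply_of_eq_some (pinv_apply_of_exists h), h.choose_spec, h]
  · simp [pdom, pcomp_apply_of_eq_none (pinv_apply_of_not_exists h), h]

theorem pcomp_pinv_self_apply (hf : ∀ x x' y, f x = some y → f x' = some y → x = x')
    (h : f x = some y) : pcomp (pinv f) f x = some x := by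
  have hex : ∃ z, f z = some y := ⟨x, h⟩
  rw [pcomp_apply_of_eq_some h, pinv_apply_of_exists hex, hf _ _ _ hex.choose_spec h]

end PartialMaps

section Words

variable {A : Type} (T : A → A → Prop)

theorem isWord_singleton (a : A) : IsWord T [a] :=
  ⟨List.cons_ne_nil _ _, List.isChain_singleton a⟩

theorem isWord_cons_cons_iff {a b : A} {x : List A} :
    IsWord T (b :: a :: x) ↔ T b a ∧ IsWord T (a :: x) := by
  simp only [IsWord, ne_eq, reduceCtorEq, not_false_eq_true, true_and]
  exact List.isChain_cons_cons

theorem theta_singleton_eq_some_iff (a : A) (x y : List A) :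
    theta T [a] x = some y ↔ IsWord T x ∧ IsWord T (a :: x) ∧ y = a :: x := by
  unfold theta
  split_ifs with h
  · simp_all [eq_comm]
  · simp_all

open Classical in
theorem idemL_apply (a : A) (x : List A) :
    idemL T a x = if IsWord T x ∧ IsWord T (a :: x) then some x else none := by
  split_ifs with h
  · refine pcomp_pinv_self_apply (fun x x' y hx hx' => ?_)
      ((theta_singleton_eq_some_iff T a x _).2 ⟨h.1, h.2, rfl⟩)
    rw [theta_singleton_eq_some_iff] at hx hx'
    simpa using hx.2.2.symm.trans hx'.2.2
  · refine pcomp_apply_of_eq_none ?_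
    unfold theta
    exact if_neg h

open Classical in
theorem prodIdems_apply (xs : List A) (x : List A) :
    prodIdems T xs x = if IsWord T x ∧ ∀ a ∈ xs, IsWord T (a :: x) then some x else none := by
  induction xs with
  | nil => simp [prodIdems, pid]
  | cons b bs ih =>
    change pcomp (idemL T b) (prodIdems T bs) x = _
    by_cases hx : IsWord T x ∧ ∀ a ∈ bs, IsWord T (a :: x)
    · rw [pcomp_apply_of_eq_some (ih.trans (if_pos hx)), idemL_apply]
      simp [hx.1, and_iff_left hx.2]
    · rw [pcomp_apply_of_eq_none (ih.trans (if_neg hx)), if_neg]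
      exact fun h => hx ⟨h.1, fun a ha => h.2 a (List.mem_cons_of_mem b ha)⟩

theorem mem_pdom_prodIdems_iff (xs : List A) (x : List A) :
    x ∈ pdom (prodIdems T xs) ↔ IsWord T x ∧ ∀ a ∈ xs, IsWord T (a :: x) := by
  simp [pdom, prodIdems_apply]

theorem mem_pdom_rgIdem_iff (a : A) (y : List A) :
    y ∈ pdom (rgIdem T a) ↔ ∃ x, IsWord T x ∧ IsWord T (a :: x) ∧ y = a :: x := by
  simp only [rgIdem, mem_pdom_pcomp_self_pinv_iff, theta_singleton_eq_some_iff]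

theorem pdom_rgIdem_ssubset_pdom_prodIdems {xs : List A} {a : A} (ha : ∀ b ∈ xs, T b a) :
    pdom (rgIdem T a) ⊂ pdom (prodIdems T xs) := by
  have hsingleton : [a] ∈ pdom (prodIdems T xs) :=
    (mem_pdom_prodIdems_iff T xs _).2 ⟨isWord_singleton T a, fun b hb =>
      (isWord_cons_cons_iff T).2 ⟨ha b hb, isWord_singleton T a⟩⟩
  refine Set.ssubset_iff_subset_ne.2 ⟨fun y hy => ?_, fun heq => ?_⟩
  · obtain ⟨x, -, hax, rfl⟩ := (mem_pdom_rgIdem_iff T a y).1 hy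
    exact (mem_pdom_prodIdems_iff T xs _).2
      ⟨hax, fun b hb => (isWord_cons_cons_iff T).2 ⟨ha b hb, hax⟩⟩
  · rw [← heq, mem_pdom_rgIdem_iff] at hsingleton
    obtain ⟨x, hx, -, hax⟩ := hsingleton
    exact hx.1 (List.cons_injective hax).symm

end Words

theorem stmt7_general {A : Type} (T : A → A → Prop)
    (xs : List A) (hnz : prodIdems T xs ≠ pzero) :
    ∃ a : A, pdom (rgIdem T a) ⊂ pdom (prodIdems T xs) := by
  obtain ⟨w, hw⟩ : ∃ w, w ∈ pdom (prodIdems T xs) := by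
    by_contra! h
    exact hnz (funext fun w => not_not.1 (h w))
  obtain ⟨⟨hw_ne, -⟩, hxs_w⟩ := (mem_pdom_prodIdems_iff T xs w).1 hw
  obtain ⟨a, w, rfl⟩ := List.exists_cons_of_ne_nil hw_ne
  exact ⟨a, pdom_rgIdem_ssubset_pdom_prodIdems T fun b hb =>
    ((isWord_cons_cons_iff T).1 (hxs_w b hb)).1⟩

/-- A nonzero product `τ = θ_{x₁}⁻¹θ_{x₁} ⋯ θ_{xₙ}⁻¹θ_{xₙ}` lies strictly above
some `θ_a θ_a⁻¹`: the domain of `θ_a θ_a⁻¹` is a proper subset of the domain of `τ`. -/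
theorem stmt7 {A : Type} [Fintype A] (T : A → A → Prop) (hT : ∀ a : A, ∃ b : A, T a b)
    (xs : List A) (hxs : xs ≠ []) (hnz : prodIdems T xs ≠ pzero) :
    ∃ a : A, pdom (rgIdem T a) ⊂ pdom (prodIdems T xs) :=
  stmt7_general T xs hnz
end
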